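/- Define for a second-order ODE w'' + A(z,w)w'³ + B(z,w)w'² + C(z,w)w' + D(z,w) = 0 the Lie expressions Ψ₁ = 3A_{zz} − 2B_{zw} + C_{ww} − 3(CA)_z + 3(DA)_w + (B²)_z + 3A·D_w − B·C_w and Ψ₂ = 3D_{ww} − 2C_{zw} + B_{zz} − 3(DA)_z + 3(DB)_w − (C²)_w − 3D·A_z + C·B_z. For the equation k₀w' + w'² + (w − zk₀)w'' = 0 written in the form w'' + F = 0 on the region w − zk₀ ≠ 0 (i.e., A = 0, B = 1/(w − zk₀), C = k₀/(w − zk₀), D = 0), one has Ψ₁ = 0 and Ψ₂ = 0 identically if and only if k₀ = 0. -/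

import Mathlib

/-- Partial derivative in the first (`z`) slot. -/
noncomputable def pz (f : ℝ → ℝ → ℝ) : ℝ → ℝ → ℝ :=
  fun z w => deriv (fun z' => f z' w) z

/-- Partial derivative in the second (`w`) slot. -/
noncomputable def pw (f : ℝ → ℝ → ℝ) : ℝ → ℝ → ℝ :=
  fun z w => deriv (fun w' => f z w') w

/-- Lie's first linearization invariant
`Ψ₁ = 3A_{zz} − 2B_{zw} + C_{ww} − 3(CA)_z + 3(DA)_w + (B²)_z + 3A·D_w − B·C_w`. -/
noncomputable def Ψ₁ (A B C D : ℝ → ℝ → ℝ) : ℝ → ℝ → ℝ := fun z w =>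
  3 * pz (pz A) z w - 2 * pw (pz B) z w + pw (pw C) z w
    - 3 * pz (fun z w => C z w * A z w) z w + 3 * pw (fun z w => D z w * A z w) z w
    + pz (fun z w => (B z w) ^ 2) z w + 3 * A z w * pw D z w - B z w * pw C z w

/-- Lie's second linearization invariant
`Ψ₂ = 3D_{ww} − 2C_{zw} + B_{zz} − 3(DA)_z + 3(DB)_w − (C²)_w − 3D·A_z + C·B_z`. -/
noncomputable def Ψ₂ (A B C D : ℝ → ℝ → ℝ) : ℝ → ℝ → ℝ := fun z w =>
  3 * pw (pw D) z w - 2 * pw (pz C) z w + pz (pz B) z w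
    - 3 * pz (fun z w => D z w * A z w) z w + 3 * pw (fun z w => D z w * B z w) z w
    - pw (fun z w => (C z w) ^ 2) z w - 3 * D z w * pz A z w + C z w * pz B z w

/-! With `u = w - z k`, the coefficients `B = 1/u` and `C = k/u` and all their partial derivatives
are constant multiples of powers of `u⁻¹`, with `∂_z = -k ∂_w` on functions of `u`. Collecting
terms gives `Ψ₁ = 9k/u³` and `Ψ₂ = 9k²/u³`, so both vanish identically exactly when `k = 0`.
Writing these functions as `c * u⁻¹ ^ n` makes every identity hold on the whole plane: on the line
`u = 0` both sides are `0` by the junk values of `⁻¹` and `deriv`. -/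

theorem deriv_inv_pow {𝕜 : Type*} [NontriviallyNormedField 𝕜] (n : ℕ) (x : 𝕜) :
    deriv (fun y : 𝕜 => y⁻¹ ^ n) x = -n * x⁻¹ ^ (n + 1) := by
  have h : (fun y : 𝕜 => y⁻¹ ^ n) = fun y => y ^ (-(n : ℤ)) := by
    funext y; rw [zpow_neg, zpow_natCast, inv_pow]
  have hexp : -(n : ℤ) - 1 = -((n + 1 : ℕ) : ℤ) := by push_cast; ring
  rw [h, deriv_zpow, hexp, zpow_neg, zpow_natCast, inv_pow]
  push_cast; ring

theorem deriv_const_mul_inv_pow (c : ℝ) (n : ℕ) :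
    deriv (fun y : ℝ => c * y⁻¹ ^ n) = fun y => -(c * n) * y⁻¹ ^ (n + 1) := by
  funext y; rw [deriv_const_mul_field, deriv_inv_pow]; ring

theorem pz_const (c : ℝ) : pz (fun _ _ => c) = fun _ _ => 0 := by
  funext z w; exact deriv_const z c

theorem pw_const (c : ℝ) : pw (fun _ _ => c) = fun _ _ => 0 := by
  funext z w; exact deriv_const w c

theorem pw_comp_sub_mul (g : ℝ → ℝ) (k : ℝ) :
    pw (fun z w => g (w - z * k)) = fun z w => deriv g (w - z * k) := by
  funext z w; exact deriv_comp_sub_const (f := g) (z * k) w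

theorem pz_comp_sub_mul (g : ℝ → ℝ) (k : ℝ) :
    pz (fun z w => g (w - z * k)) = fun z w => -k * deriv g (w - z * k) := by
  funext z w
  have h := deriv_comp_mul_left k (fun y => g (w - y)) z
  simp only [smul_eq_mul, deriv_comp_const_sub] at h
  simp only [pz, mul_comm _ k, h]; ring

noncomputable def scaledInvPow (k c : ℝ) (n : ℕ) : ℝ → ℝ → ℝ := fun z w => c * (w - z * k)⁻¹ ^ n

theorem div_sub_mul_eq_scaledInvPow (k c : ℝ) :
    (fun z w : ℝ => c / (w - z * k)) = scaledInvPow k c 1 := by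
  funext z w; simp [scaledInvPow, div_eq_mul_inv]

theorem sq_scaledInvPow (k c : ℝ) (n : ℕ) :
    (fun z w => scaledInvPow k c n z w ^ 2) = scaledInvPow k (c ^ 2) (2 * n) := by
  funext z w; simp only [scaledInvPow]; ring

theorem pw_scaledInvPow (k c : ℝ) (n : ℕ) :
    pw (scaledInvPow k c n) = scaledInvPow k (-(c * n)) (n + 1) := by
  refine (pw_comp_sub_mul (fun y => c * y⁻¹ ^ n) k).trans ?_
  rw [deriv_const_mul_inv_pow]; rfl

theorem pz_scaledInvPow (k c : ℝ) (n : ℕ) :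
    pz (scaledInvPow k c n) = scaledInvPow k (c * n * k) (n + 1) := by
  refine (pz_comp_sub_mul (fun y => c * y⁻¹ ^ n) k).trans ?_
  rw [deriv_const_mul_inv_pow]
  funext z w; simp only [scaledInvPow]; ring

theorem Ψ₁_L27_eq (k z w : ℝ) :
    Ψ₁ (fun _ _ => 0) (fun z w => 1 / (w - z * k)) (fun z w => k / (w - z * k))
      (fun _ _ => 0) z w = 9 * k * (w - z * k)⁻¹ ^ 3 := by
  rw [div_sub_mul_eq_scaledInvPow, div_sub_mul_eq_scaledInvPow]
  simp only [Ψ₁, mul_zero, sq_scaledInvPow, pz_const, pw_const, pz_scaledInvPow,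
    pw_scaledInvPow]
  simp only [scaledInvPow]
  push_cast; ring

theorem Ψ₂_L27_eq (k z w : ℝ) :
    Ψ₂ (fun _ _ => 0) (fun z w => 1 / (w - z * k)) (fun z w => k / (w - z * k))
      (fun _ _ => 0) z w = 9 * k ^ 2 * (w - z * k)⁻¹ ^ 3 := by
  rw [div_sub_mul_eq_scaledInvPow, div_sub_mul_eq_scaledInvPow]
  simp only [Ψ₂, mul_zero, zero_mul, sq_scaledInvPow, pz_const, pw_const, pz_scaledInvPow,
    pw_scaledInvPow]
  simp only [scaledInvPow]
  push_cast; ring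

theorem linearization_test_L27 (k₀ : ℝ) :
    (∀ z w : ℝ, w - z * k₀ ≠ 0 →
        Ψ₁ (fun _ _ => 0) (fun z w => 1 / (w - z * k₀)) (fun z w => k₀ / (w - z * k₀))
          (fun _ _ => 0) z w = 0 ∧
        Ψ₂ (fun _ _ => 0) (fun z w => 1 / (w - z * k₀)) (fun z w => k₀ / (w - z * k₀))
          (fun _ _ => 0) z w = 0) ↔ k₀ = 0 := by
  constructor
  · intro h
    have hΨ₁ := (h 0 1 (by norm_num)).1
    rw [Ψ₁_L27_eq] at hΨ₁
    norm_num at hΨ₁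
    exact hΨ₁
  · rintro rfl z w -
    exact ⟨by rw [Ψ₁_L27_eq]; ring, by rw [Ψ₂_L27_eq]; ring⟩
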